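/- arXiv:1512.07262 — 3 statements merged into one kernel-verified Lean document; each statement's English description precedes it below -/
import Mathlib

section
/- Let A ≥ 0 and X be independent random variables and B a random variable such that (A,B) is independent of X, with values in ℝ, and let γ > 0. Then ∫₀^∞ |P(A·X ∨ B > y) − P(A·X > y)| · y^{γ−1} dy ≤ γ^{-1} · E[B₊^γ], where a ∨ b = max(a,b) and x₊ = max(x,0). -/
open MeasureTheory ProbabilityTheory Filter Set

/-- for `A ≥ 0`, `(A,B)` independent of `X`, and `γ > 0`,
`∫₀^∞ |P(AX ∨ B > y) − P(AX > y)| y^{γ−1} dy ≤ γ⁻¹ E[B₊^γ]`. -/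
theorem stmt_5 {Ω : Type*} [MeasurableSpace Ω] (μ : Measure Ω) [IsProbabilityMeasure μ]
    (A B X : Ω → ℝ) (hA : Measurable A) (hB : Measurable B) (hX : Measurable X)
    (hA0 : ∀ ω, 0 ≤ A ω)
    (hindep : IndepFun (fun ω => (A ω, B ω)) X μ)
    (γ : ℝ) (hγ : 0 < γ) :
    ∫⁻ y in Set.Ioi (0 : ℝ),
        ENNReal.ofReal
          (|(μ {ω | max (A ω * X ω) (B ω) > y}).toReal -
              (μ {ω | A ω * X ω > y}).toReal| * y ^ (γ - 1))
      ≤ ENNReal.ofReal γ⁻¹ * ∫⁻ ω, ENNReal.ofReal (max (B ω) 0 ^ γ) ∂μ := by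
  -- Step 1: layer cake for f = B₊ with weight g t = t^(γ-1)
  have hγ1 : (-1 : ℝ) < γ - 1 := by linarith
  have key := lintegral_comp_eq_lintegral_meas_lt_mul μ
      (f := fun ω => max (B ω) 0) (g := fun t => t ^ (γ - 1))
      (ae_of_all _ fun ω => le_max_right _ _)
      ((hB.max measurable_const).aemeasurable)
      (fun t _ => intervalIntegral.intervalIntegrable_rpow' hγ1)
      (by
        filter_upwards [ae_restrict_mem measurableSet_Ioi] with t ht
        exact Real.rpow_nonneg (le_of_lt ht) _)
  have hint : ∀ ω, (∫ t in (0:ℝ)..(max (B ω) 0), t ^ (γ - 1)) = max (B ω) 0 ^ γ / γ := by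
    intro ω
    rw [integral_rpow (Or.inl hγ1), Real.zero_rpow (by linarith : γ - 1 + 1 ≠ 0)]
    rw [sub_zero, sub_add_cancel]
  simp only [hint] at key
  -- rewrite RHS of the goal
  have hRHS : ENNReal.ofReal γ⁻¹ * ∫⁻ ω, ENNReal.ofReal (max (B ω) 0 ^ γ) ∂μ
      = ∫⁻ ω, ENNReal.ofReal (max (B ω) 0 ^ γ / γ) ∂μ := by
    rw [← lintegral_const_mul' _ _ ENNReal.ofReal_ne_top]
    congr 1 with ω
    rw [← ENNReal.ofReal_mul (by positivity)]
    congr 1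
    field_simp
  rw [hRHS, key]
  -- Step 2: pointwise bound on the integrand
  refine lintegral_mono_ae ?_
  filter_upwards [ae_restrict_mem measurableSet_Ioi] with y hy
  have hy0 : (0:ℝ) < y := hy
  set S1 := {ω | max (A ω * X ω) (B ω) > y} with hS1
  set S2 := {ω | A ω * X ω > y} with hS2
  have hsub : S2 ⊆ S1 := by
    intro ω h
    simp only [hS1, hS2, mem_setOf_eq, gt_iff_lt] at *
    exact lt_max_of_lt_left h
  have hcover : S1 ⊆ S2 ∪ {ω | y < B ω} := by
    intro ω h
    simp only [hS1, mem_setOf_eq, gt_iff_lt] at h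
    rcases lt_max_iff.mp h with h' | h'
    · exact Or.inl h'
    · exact Or.inr h'
  have hmax : {a | y < max (B a) 0} = {ω | y < B ω} := by
    ext a; simp only [mem_setOf_eq, lt_max_iff]
    exact or_iff_left (not_lt_of_ge hy0.le)
  have h1 : (μ S1).toReal ≤ (μ S2).toReal + (μ {ω | y < B ω}).toReal := by
    have := (measure_mono (μ := μ) hcover).trans (measure_union_le S2 {ω | y < B ω})
    have h2 := ENNReal.toReal_mono (by finiteness) this
    rwa [ENNReal.toReal_add (by finiteness) (by finiteness)] at h2
  have habs : |(μ S1).toReal - (μ S2).toReal| ≤ (μ {ω | y < B ω}).toReal := by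
    rw [abs_of_nonneg (sub_nonneg.mpr (ENNReal.toReal_mono (by finiteness)
      (measure_mono hsub)))]
    linarith
  calc ENNReal.ofReal (|(μ S1).toReal - (μ S2).toReal| * y ^ (γ - 1))
      ≤ ENNReal.ofReal ((μ {ω | y < B ω}).toReal * y ^ (γ - 1)) := by
        exact ENNReal.ofReal_le_ofReal
          (mul_le_mul_of_nonneg_right habs (Real.rpow_nonneg hy0.le _))
    _ = μ {ω | y < B ω} * ENNReal.ofReal (y ^ (γ - 1)) := by
        rw [ENNReal.ofReal_mul ENNReal.toReal_nonneg,
          ENNReal.ofReal_toReal (by finiteness)]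
    _ = μ {a | y < max (B a) 0} * ENNReal.ofReal (y ^ (γ - 1)) := by rw [hmax]
end

section
/- Let X be a real random variable, κ > 0, and suppose the function f̂(s) = e^{−s}∫_{−∞}^s e^{(κ+1)y} P(X > e^y) dy satisfies m(s)·f̂(s) → c as s → ∞, where m is nondecreasing and m(log x) is slowly varying. Then m(log x)·x^κ·P(X > x) → c·(κ+1)/(κ+1) = c, i.e. lim_{x→∞} m(log x) x^κ P(X > x) = c. (Unsmoothing/Tauberian step.) -/
open MeasureTheory Filter Set Topology Real

/-!
Put `s = log x`, `g s = P(X > e^s)` and `F s = ∫_{-∞}^s e^{(κ+1)y} g y dy`, so that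
`f̂ s = e^{-s} F s`. As `g` is nonincreasing,
`F (s + δ) - F s ≤ g s ∫_s^{s+δ} e^{(κ+1)y} dy` for every `δ` of either sign; dividing by
`(e^{(κ+1)δ} - 1)/(κ+1)` bounds `e^{κs} g s` from below when `δ > 0` and from above when
`δ < 0` by difference quotients of `f̂`. Since `m (s + δ) / m s → 1`, we get
`m s · e^{-s} F (s + δ) → e^δ c`, so after multiplying by `m s` these bounds tend to
`c (κ+1)(e^δ - 1)/(e^{(κ+1)δ} - 1)`, which tends to `c` as `δ → 0`.
-/

theorem tendsto_of_squeeze_family {α ι β : Type*} [TopologicalSpace β] [LinearOrder β]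
    [OrderTopology β] {la : Filter α} {l₁ l₂ : Filter ι} [l₁.NeBot] [l₂.NeBot]
    {f : α → β} {φ : ι → α → β} {a : ι → β} {c : β}
    (hφ : ∀ i, Tendsto (φ i) la (𝓝 (a i))) (ha₁ : Tendsto a l₁ (𝓝 c))
    (ha₂ : Tendsto a l₂ (𝓝 c)) (hle : ∀ᶠ i in l₁, ∀ᶠ x in la, φ i x ≤ f x)
    (hge : ∀ᶠ i in l₂, ∀ᶠ x in la, f x ≤ φ i x) : Tendsto f la (𝓝 c) := by
  refine tendsto_order.2 ⟨fun b hb => ?_, fun b hb => ?_⟩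
  · obtain ⟨i, hbi, hi⟩ := ((ha₁.eventually (eventually_gt_nhds hb)).and hle).exists
    filter_upwards [(hφ i).eventually (eventually_gt_nhds hbi), hi] with x hx hix
    exact hx.trans_le hix
  · obtain ⟨i, hbi, hi⟩ := ((ha₂.eventually (eventually_lt_nhds hb)).and hge).exists
    filter_upwards [(hφ i).eventually (eventually_lt_nhds hbi), hi] with x hx hix
    exact hix.trans_lt hx

theorem tendsto_exp_mul_sub_one_div (a : ℝ) :
    Tendsto (fun δ => (exp (a * δ) - 1) / δ) (𝓝[≠] 0) (𝓝 a) := by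
  have h : HasDerivAt (fun δ => exp (a * δ)) a 0 := by
    simpa using ((hasDerivAt_id (0 : ℝ)).const_mul a).exp
  simpa [slope_fun_def_field] using h.tendsto_slope

theorem tendsto_mul_exp_sub_one_div_exp_mul_sub_one {k : ℝ} (hk : k ≠ 0) :
    Tendsto (fun δ => k * (exp δ - 1) / (exp (k * δ) - 1)) (𝓝[≠] 0) (𝓝 1) := by
  have h := (tendsto_exp_mul_sub_one_div 1).const_mul k |>.div (tendsto_exp_mul_sub_one_div k) hk
  rw [mul_one, div_self hk] at h
  refine h.congr' ?_
  filter_upwards [self_mem_nhdsWithin] with δ (hδ : δ ≠ 0)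
  simp only [Pi.div_apply, one_mul]
  field_simp

theorem tendsto_mul_comp_add_of_tendsto_div {L u : ℝ → ℝ} {c δ : ℝ}
    (hL : Tendsto (fun s => L (s + δ) / L s) atTop (𝓝 1))
    (h : Tendsto (fun s => L s * u s) atTop (𝓝 c)) :
    Tendsto (fun s => L s * u (s + δ)) atTop (𝓝 c) := by
  have h' := (h.comp (tendsto_atTop_add_const_right atTop δ tendsto_id)).div hL one_ne_zero
  rw [div_one] at h'
  refine h'.congr' ?_
  filter_upwards [hL.eventually_ne one_ne_zero] with s hs
  have hs0 : L s ≠ 0 := fun h0 => hs (by simp [h0])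
  have hsδ : L (s + δ) ≠ 0 := fun h0 => hs (by simp [h0])
  simp only [Pi.div_apply, Function.comp_apply, id]
  field_simp

theorem tendsto_comp_add_div_of_slowlyVarying {m : ℝ → ℝ}
    (hslow : ∀ l > 0, Tendsto (fun x => m (log (l * x)) / m (log x)) atTop (𝓝 1)) (δ : ℝ) :
    Tendsto (fun s => m (s + δ) / m s) atTop (𝓝 1) := by
  refine ((hslow (exp δ) (exp_pos δ)).comp tendsto_exp_atTop).congr fun s => ?_
  rw [Function.comp_apply, ← exp_add, log_exp, log_exp, add_comm δ s]

section Antitone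

variable {g : ℝ → ℝ} {k : ℝ}

theorem integrableOn_exp_mul_mul_Iic (hk : 0 < k) (hg : Antitone g) (hgb : BddAbove (range g))
    (t : ℝ) : IntegrableOn (fun y => exp (k * y) * g y) (Iic t) := by
  obtain ⟨C, hC⟩ := hgb
  refine (integrableOn_exp_mul_Iic hk t).mul_bdd hg.measurable.aestronglyMeasurable
    (c := max |g t| |C|) ((ae_restrict_iff' measurableSet_Iic).2 (ae_of_all _ fun y hy => ?_))
  exact abs_le_max_abs_abs (hg hy) (hC (mem_range_self y))

theorem integral_Iic_exp_mul_mul_sub_le (hk : 0 < k) (hg : Antitone g)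
    (hgb : BddAbove (range g)) (s t : ℝ) :
    (∫ y in Iic t, exp (k * y) * g y) - ∫ y in Iic s, exp (k * y) * g y ≤
      g s * (exp (k * t) - exp (k * s)) / k := by
  have hexp : Continuous fun y => exp (k * y) := by fun_prop
  have hconst : ∫ y in s..t, exp (k * y) * g s = g s * (exp (k * t) - exp (k * s)) / k := by
    rw [intervalIntegral.integral_mul_const, ← intervalIntegral.integral_Iic_sub_Iic
      (integrableOn_exp_mul_Iic hk s) (integrableOn_exp_mul_Iic hk t),
      integral_exp_mul_Iic hk, integral_exp_mul_Iic hk]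
    ring
  rw [intervalIntegral.integral_Iic_sub_Iic (integrableOn_exp_mul_mul_Iic hk hg hgb s)
    (integrableOn_exp_mul_mul_Iic hk hg hgb t), ← hconst]
  have hint : ∀ a b, IntervalIntegrable (fun y => exp (k * y) * g y) volume a b :=
    fun a b => hg.intervalIntegrable.continuousOn_mul hexp.continuousOn
  have hint_const : ∀ a b, IntervalIntegrable (fun y => exp (k * y) * g s) volume a b :=
    fun a b => (hexp.mul continuous_const).intervalIntegrable a b
  rcases le_total s t with hst | hts
  · exact intervalIntegral.integral_mono_on hst (hint s t) (hint_const s t)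
      fun y hy => mul_le_mul_of_nonneg_left (hg hy.1) (exp_pos _).le
  · rw [intervalIntegral.integral_symm t s, intervalIntegral.integral_symm t s, neg_le_neg_iff]
    exact intervalIntegral.integral_mono_on hts (hint_const t s) (hint t s)
      fun y hy => mul_le_mul_of_nonneg_left (hg hy.2) (exp_pos _).le

theorem exp_neg_mul_integral_Iic_sub_le {κ : ℝ} (hκ : -1 < κ) (hg : Antitone g)
    (hgb : BddAbove (range g)) (s δ : ℝ) :
    exp (-s) * ((∫ y in Iic (s + δ), exp ((κ + 1) * y) * g y) -
        ∫ y in Iic s, exp ((κ + 1) * y) * g y) ≤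
      exp (κ * s) * g s * ((exp ((κ + 1) * δ) - 1) / (κ + 1)) := by
  have hk : 0 < κ + 1 := by linarith
  have hexp : exp ((κ + 1) * (s + δ)) - exp ((κ + 1) * s) =
      exp s * exp (κ * s) * (exp ((κ + 1) * δ) - 1) := by
    rw [mul_sub, mul_one, ← exp_add, ← exp_add]
    ring_nf
  calc _ ≤ exp (-s) * (g s * (exp ((κ + 1) * (s + δ)) - exp ((κ + 1) * s)) / (κ + 1)) := by
        gcongr
        exact integral_Iic_exp_mul_mul_sub_le hk hg hgb s (s + δ)
    _ = exp (κ * s) * g s * ((exp ((κ + 1) * δ) - 1) / (κ + 1)) := by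
        rw [hexp, exp_neg]
        field_simp

end Antitone

theorem tendsto_mul_exp_mul_of_tendsto_smoothing {g L : ℝ → ℝ} {κ c : ℝ} (hκ : -1 < κ)
    (hg : Antitone g) (hgb : BddAbove (range g)) (hL : ∀ᶠ s in atTop, 0 ≤ L s)
    (hLshift : ∀ δ, Tendsto (fun s => L (s + δ) / L s) atTop (𝓝 1))
    (h : Tendsto (fun s => L s * (exp (-s) * ∫ y in Iic s, exp ((κ + 1) * y) * g y))
      atTop (𝓝 c)) :
    Tendsto (fun s => L s * exp (κ * s) * g s) atTop (𝓝 c) := by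
  have hk : 0 < κ + 1 := by linarith
  set F : ℝ → ℝ := fun t => ∫ y in Iic t, exp ((κ + 1) * y) * g y
  set φ : ℝ → ℝ → ℝ := fun δ s =>
    L s * (exp (-s) * (F (s + δ) - F s)) / ((exp ((κ + 1) * δ) - 1) / (κ + 1))
  have hφ : ∀ δ, Tendsto (φ δ) atTop
      (𝓝 (c * ((κ + 1) * (exp δ - 1) / (exp ((κ + 1) * δ) - 1)))) := by
    intro δ
    have hshift := (tendsto_mul_comp_add_of_tendsto_div (hLshift δ) h).const_mul (exp δ)
    convert (hshift.sub h).div_const ((exp ((κ + 1) * δ) - 1) / (κ + 1)) using 1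
    · ext s
      simp only [φ, F]
      rw [neg_add, exp_add, exp_neg δ]
      field_simp
    · rw [div_div_eq_mul_div]
      congr 1
      ring
  have hincr : ∀ δ, ∀ᶠ s in atTop, L s * (exp (-s) * (F (s + δ) - F s)) ≤
      L s * exp (κ * s) * g s * ((exp ((κ + 1) * δ) - 1) / (κ + 1)) := fun δ => by
    filter_upwards [hL] with s hs
    simpa only [mul_assoc] using
      mul_le_mul_of_nonneg_left (exp_neg_mul_integral_Iic_sub_le hκ hg hgb s δ) hs
  have hr := (tendsto_mul_exp_sub_one_div_exp_mul_sub_one hk.ne').const_mul c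
  rw [mul_one] at hr
  refine tendsto_of_squeeze_family hφ (hr.mono_left (nhdsGT_le_nhdsNE 0))
    (hr.mono_left (nhdsLT_le_nhdsNE 0)) ?_ ?_
  · filter_upwards [self_mem_nhdsWithin] with δ (hδ : 0 < δ)
    have hD : 0 < (exp ((κ + 1) * δ) - 1) / (κ + 1) :=
      div_pos (sub_pos.2 (one_lt_exp_iff.2 (mul_pos hk hδ))) hk
    filter_upwards [hincr δ] with s hs using (div_le_iff₀ hD).2 hs
  · filter_upwards [self_mem_nhdsWithin] with δ (hδ : δ < 0)
    have hD : (exp ((κ + 1) * δ) - 1) / (κ + 1) < 0 :=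
      div_neg_of_neg_of_pos (sub_neg.2 (exp_lt_one_iff.2 (mul_neg_of_pos_of_neg hk hδ))) hk
    filter_upwards [hincr δ] with s hs using (le_div_iff_of_neg hD).2 hs

theorem stmt_12_general {Ω : Type*} [MeasurableSpace Ω] (μ : Measure Ω) [IsProbabilityMeasure μ]
    (X : Ω → ℝ) (κ : ℝ) (hκ : 0 < κ)
    (m : ℝ → ℝ) (hmpos : ∀ x, 0 < m x)
    (hslow : ∀ l > 0,
      Tendsto (fun x => m (Real.log (l * x)) / m (Real.log x)) atTop (nhds 1))
    (fhat : ℝ → ℝ)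
    (hfhat : ∀ s, fhat s =
      Real.exp (-s) * ∫ y in Set.Iic s, Real.exp ((κ + 1) * y) * (μ {ω | X ω > Real.exp y}).toReal)
    (c : ℝ) (hconv : Tendsto (fun s => m s * fhat s) atTop (nhds c)) :
    Tendsto (fun x => m (Real.log x) * x ^ κ * (μ {ω | X ω > x}).toReal) atTop (nhds c) := by
  set p : ℝ → ℝ := fun t => (μ {ω | X ω > exp t}).toReal
  have hp : Antitone p := fun s t hst =>
    measureReal_mono fun ω (h : exp t < X ω) => (exp_le_exp.2 hst).trans_lt h
  have hpb : BddAbove (range p) := ⟨1, forall_mem_range.2 fun t => measureReal_le_one⟩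
  have hT := tendsto_mul_exp_mul_of_tendsto_smoothing (by linarith) hp hpb
    (Eventually.of_forall fun s => (hmpos s).le) (tendsto_comp_add_div_of_slowlyVarying hslow)
    (hconv.congr fun s => by rw [hfhat])
  refine (hT.comp tendsto_log_atTop).congr' ?_
  filter_upwards [eventually_gt_atTop 0] with x hx
  simp [p, exp_log hx, rpow_def_of_pos hx, mul_comm κ]

/-- unsmoothing/Tauberian step: if
`f̂(s) = e^{−s} ∫_{−∞}^s e^{(κ+1)y} P(X > e^y) dy` satisfies `m(s) f̂(s) → c`,
where `m` is nondecreasing, positive and `m ∘ log` is slowly varying, then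
`m(log x) x^κ P(X > x) → c`. -/
theorem stmt_12 {Ω : Type*} [MeasurableSpace Ω] (μ : Measure Ω) [IsProbabilityMeasure μ]
    (X : Ω → ℝ) (hX : Measurable X) (κ : ℝ) (hκ : 0 < κ)
    (m : ℝ → ℝ) (hmono : Monotone m) (hmpos : ∀ x, 0 < m x)
    (hslow : ∀ l > 0,
      Tendsto (fun x => m (Real.log (l * x)) / m (Real.log x)) atTop (nhds 1))
    (fhat : ℝ → ℝ)
    (hfhat : ∀ s, fhat s =
      Real.exp (-s) * ∫ y in Set.Iic s, Real.exp ((κ + 1) * y) * (μ {ω | X ω > Real.exp y}).toReal)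
    (c : ℝ) (hconv : Tendsto (fun s => m s * fhat s) atTop (nhds c)) :
    Tendsto (fun x => m (Real.log x) * x ^ κ * (μ {ω | X ω > x}).toReal) atTop (nhds c) :=
  stmt_12_general μ X κ hκ m hmpos hslow fhat hfhat c hconv
end

section
/- There exists a directly Riemann integrable function z : ℝ → [0,∞) and a sequence x_n → ∞ such that m(x_n)·z(x_n − a) → ∞ for a fixed a > 0 and m regularly varying of index 1−α with α ∈ (0,1) and 2α < 2 − β for a suitable β > 1. Concretely: let z be the piecewise linear 'tent' function with peaks z(n²) = n^{−β} on intervals [n² − 1/2, n² + 1/2] (β > 1) and 0 elsewhere; then z is directly Riemann integrable, but m(n²)·n^{−β} → ∞ whenever m is regularly varying of index 1−α and 2(1−α) > β, i.e. 2α + β < 2. -/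
open Filter Set
open scoped ENNReal

/-- Upper Riemann sum of mesh `h` for direct Riemann integrability. -/
noncomputable def upperSum (z : ℝ → ℝ) (h : ℝ) : ℝ≥0∞ :=
  ∑' k : ℤ, ENNReal.ofReal (h * sSup (z '' Set.Ico ((k : ℝ) * h) (((k : ℝ) + 1) * h)))

/-- Lower Riemann sum of mesh `h` for direct Riemann integrability. -/
noncomputable def lowerSum (z : ℝ → ℝ) (h : ℝ) : ℝ≥0∞ :=
  ∑' k : ℤ, ENNReal.ofReal (h * sInf (z '' Set.Ico ((k : ℝ) * h) (((k : ℝ) + 1) * h)))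

/-- Direct Riemann integrability of a nonnegative function: all upper sums are
finite and upper and lower sums converge to a common limit as the mesh `h → 0+`. -/
def DRIntegrable (z : ℝ → ℝ) : Prop :=
  (∀ h > 0, upperSum z h ≠ ⊤) ∧
  ∃ L : ℝ,
    Tendsto (fun h => (upperSum z h).toReal) (nhdsWithin 0 (Set.Ioi 0)) (nhds L) ∧
    Tendsto (fun h => (lowerSum z h).toReal) (nhdsWithin 0 (Set.Ioi 0)) (nhds L)

/-!
The witness is the spike function equal to `n ^ (-β)` at `n ^ 2` and to `0` elsewhere. It is
summable over `ℝ`, and a nonnegative summable function is directly Riemann integrable with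
integral `0`: every mesh cell contains a zero of it, and the upper sum of mesh `h` is at most
`h * ∑' x, z x`.

For measurable `m` regularly varying of index `ρ`, `f u = log (m (exp u)) - ρ * u` satisfies
`f (u + t) - f u → 0` for every `t`. A Steinhaus-type measure argument makes this uniform in
`t ∈ [0, 1]` (the uniform convergence theorem), whence `f u = o(u)` and `m x / x ^ σ → ∞` for
every `σ < ρ`. With `ρ = 1 - α` and `σ = β / 2 < ρ` this gives `m (n ^ 2) * n ^ (-β) → ∞`.
-/

open MeasureTheory Topology

lemma tsum_indicator_Ico_int_mul {M : Type*} [AddCommMonoid M] [TopologicalSpace M]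
    {h : ℝ} (hh : 0 < h) (f : ℝ → M) (x : ℝ) :
    ∑' k : ℤ, (Ico ((k : ℝ) * h) ((k + 1) * h)).indicator f x = f x := by
  have hmem : x ∈ Ico ((⌊x / h⌋ : ℝ) * h) ((⌊x / h⌋ + 1) * h) :=
    ⟨(le_div_iff₀ hh).1 (Int.floor_le _), (div_lt_iff₀ hh).1 (Int.lt_floor_add_one _)⟩
  rw [tsum_eq_single ⌊x / h⌋ fun k hk => indicator_of_notMem (fun hx => hk ?_) f,
    indicator_of_mem hmem]
  rw [eq_comm, Int.floor_eq_iff, le_div_iff₀ hh, div_lt_iff₀ hh]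
  exact hx

section Summable

variable {z : ℝ → ℝ}

lemma sSup_image_le_tsum_indicator (hz0 : 0 ≤ z) (hz : Summable z) (s : Set ℝ) :
    sSup (z '' s) ≤ ∑' x, s.indicator z x := by
  refine Real.sSup_le ?_ (tsum_nonneg fun x => indicator_nonneg (fun x _ => hz0 x) x)
  rintro _ ⟨x, hx, rfl⟩
  rw [← indicator_of_mem hx z]
  exact (hz.indicator s).le_tsum x fun y _ => indicator_nonneg (fun y _ => hz0 y) y

lemma upperSum_le_of_summable (hz0 : 0 ≤ z) (hz : Summable z) {h : ℝ} (hh : 0 < h) :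
    upperSum z h ≤ ENNReal.ofReal (h * ∑' x, z x) := by
  have hind (s : Set ℝ) : 0 ≤ s.indicator z := indicator_nonneg fun x _ => hz0 x
  calc upperSum z h
      ≤ ∑' k : ℤ, ENNReal.ofReal h *
          ∑' x, ENNReal.ofReal ((Ico ((k : ℝ) * h) ((k + 1) * h)).indicator z x) := by
        refine ENNReal.tsum_le_tsum fun k => ?_
        rw [← ENNReal.ofReal_tsum_of_nonneg (hind _) (hz.indicator _),
          ← ENNReal.ofReal_mul hh.le]
        gcongr
        exact sSup_image_le_tsum_indicator hz0 hz _
    _ = ENNReal.ofReal h * ∑' x, ENNReal.ofReal (z x) := by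
        rw [ENNReal.tsum_mul_left, ENNReal.tsum_comm]
        congr 1
        refine tsum_congr fun x => ?_
        have hcomp (s : Set ℝ) :
            ENNReal.ofReal (s.indicator z x) = s.indicator (ENNReal.ofReal ∘ z) x :=
          (congr_fun (indicator_comp_of_zero ENNReal.ofReal_zero) x).symm
        simp only [hcomp]
        exact tsum_indicator_Ico_int_mul hh _ x
    _ = ENNReal.ofReal (h * ∑' x, z x) := by
        rw [ENNReal.ofReal_mul hh.le, ENNReal.ofReal_tsum_of_nonneg hz0 hz]

lemma lowerSum_eq_zero_of_summable (hz0 : 0 ≤ z) (hz : Summable z) {h : ℝ} (hh : 0 < h) :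
    lowerSum z h = 0 := by
  refine ENNReal.tsum_eq_zero.2 fun k => ENNReal.ofReal_eq_zero.2 ?_
  obtain ⟨x, hx, hzx⟩ : ∃ x ∈ Ico ((k : ℝ) * h) ((k + 1) * h), z x = 0 := by
    by_contra! hne
    have := hz.countable_support.mono fun x hx => hne x hx
    rw [Cardinal.Real.Ico_countable_iff] at this
    nlinarith
  have hinf : sInf (z '' Ico ((k : ℝ) * h) ((k + 1) * h)) ≤ 0 :=
    csInf_le ⟨0, by rintro _ ⟨y, -, rfl⟩; exact hz0 y⟩ ⟨x, hx, hzx⟩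
  exact mul_nonpos_of_nonneg_of_nonpos hh.le hinf

theorem drIntegrable_of_summable (hz0 : 0 ≤ z) (hz : Summable z) : DRIntegrable z := by
  have hupper {h : ℝ} (hh : 0 < h) : (upperSum z h).toReal ≤ h * ∑' x, z x := by
    refine (ENNReal.toReal_mono ENNReal.ofReal_ne_top (upperSum_le_of_summable hz0 hz hh)).trans ?_
    rw [ENNReal.toReal_ofReal (mul_nonneg hh.le (tsum_nonneg hz0))]
  refine ⟨fun h hh => ne_top_of_le_ne_top ENNReal.ofReal_ne_top
    (upperSum_le_of_summable hz0 hz hh), 0, ?_, ?_⟩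
  · have hlim : Tendsto (fun h : ℝ => h * ∑' x, z x) (𝓝[>] 0) (𝓝 0) := by
      simpa using ((tendsto_id (x := 𝓝 (0 : ℝ))).mul_const (∑' x, z x)).mono_left
        nhdsWithin_le_nhds
    refine tendsto_of_tendsto_of_tendsto_of_le_of_le' tendsto_const_nhds hlim
      (Eventually.of_forall fun _ => ENNReal.toReal_nonneg) ?_
    filter_upwards [self_mem_nhdsWithin] with h hh using hupper hh
  · refine tendsto_const_nhds.congr' ?_
    filter_upwards [self_mem_nhdsWithin] with h hh
    rw [lowerSum_eq_zero_of_summable hz0 hz hh, ENNReal.toReal_zero]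

end Summable

noncomputable def spike (β : ℝ) : ℝ → ℝ :=
  (range fun n : ℕ => (n : ℝ) ^ 2).indicator fun x => x ^ (-β / 2)

lemma spike_nonneg (β : ℝ) : 0 ≤ spike β :=
  indicator_nonneg fun _ ⟨_, hn⟩ => hn ▸ Real.rpow_nonneg (sq_nonneg _) _

lemma spike_sq (β : ℝ) (n : ℕ) : spike β ((n : ℝ) ^ 2) = (n : ℝ) ^ (-β) := by
  rw [spike, indicator_of_mem (mem_range_self n), ← Real.rpow_natCast,
    ← Real.rpow_mul n.cast_nonneg]
  ring_nf

lemma summable_spike {β : ℝ} (hβ : 1 < β) : Summable (spike β) := by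
  have hinj : Function.Injective fun n : ℕ => (n : ℝ) ^ 2 := fun a b hab =>
    Nat.pow_left_injective two_ne_zero (Nat.cast_injective (R := ℝ) (by simpa using hab))
  refine (hinj.summable_iff (f := spike β) fun x hx => indicator_of_notMem hx _).1 ?_
  simpa only [Function.comp_def, spike_sq] using Real.summable_nat_rpow.2 (by linarith : -β < -1)

lemma abs_sub_le_of_forall_abs_add_sub_le {f : ℝ → ℝ} {U ε : ℝ}
    (hU : ∀ u ≥ U, ∀ s ∈ Icc (0 : ℝ) 1, |f (u + s) - f u| ≤ ε) {u : ℝ} (hu : U ≤ u) :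
    |f u - f U| ≤ (u - U + 1) * ε := by
  have hε : 0 ≤ ε := (abs_nonneg _).trans (hU U le_rfl 0 ⟨le_rfl, zero_le_one⟩)
  have key : ∀ k : ℕ, ∀ s ∈ Icc (0 : ℝ) (k + 1), |f (U + s) - f U| ≤ (k + 1) * ε := by
    intro k
    induction k with
    | zero => simpa using hU U le_rfl
    | succ k ih =>
      rintro s ⟨hs0, hs⟩
      rcases le_or_gt s (k + 1) with hsk | hsk
      · exact (ih s ⟨hs0, hsk⟩).trans (by push_cast; nlinarith)
      · have hstep := hU (U + (s - 1)) (by linarith [k.cast_nonneg (α := ℝ)]) 1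
          ⟨zero_le_one, le_rfl⟩
        have hprev := ih (s - 1)
          ⟨by linarith [k.cast_nonneg (α := ℝ)], by push_cast at hs; linarith⟩
        rw [add_assoc, sub_add_cancel] at hstep
        calc |f (U + s) - f U|
            ≤ |f (U + s) - f (U + (s - 1))| + |f (U + (s - 1)) - f U| := abs_sub_le _ _ _
          _ ≤ ((k + 1 : ℕ) + 1) * ε := by push_cast; linarith
  have hk := key ⌊u - U⌋₊ (u - U) ⟨by linarith, (Nat.lt_floor_add_one _).le⟩
  rw [add_sub_cancel] at hk
  exact hk.trans (by gcongr; exact Nat.floor_le (by linarith))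

lemma isLittleO_id_of_tendstoUniformlyOn_add_sub {f : ℝ → ℝ}
    (hf : TendstoUniformlyOn (fun u s => f (u + s) - f u) 0 atTop (Icc 0 1)) :
    f =o[atTop] id := by
  refine Asymptotics.isLittleO_iff.2 fun c hc => ?_
  obtain ⟨U, hU⟩ := eventually_atTop.1 (Metric.tendstoUniformlyOn_iff.1 hf (c / 2) (by positivity))
  have hU' : ∀ u ≥ U, ∀ s ∈ Icc (0 : ℝ) 1, |f (u + s) - f u| ≤ c / 2 := fun u hu s hs => by
    simpa [Real.dist_eq, abs_sub_comm] using (hU u hu s hs).le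
  filter_upwards [eventually_ge_atTop U, eventually_ge_atTop (2 * |f U| / c + |1 - U|)]
    with u hUu hu
  have hlin := abs_sub_le_of_forall_abs_add_sub_le hU' hUu
  rw [div_add' _ _ _ hc.ne', div_le_iff₀ hc] at hu
  calc ‖f u‖ ≤ |f U| + |f u - f U| := by
        rw [Real.norm_eq_abs]; linarith [abs_sub_abs_le_abs_sub (f u) (f U)]
    _ ≤ |f U| + (u - U + 1) * (c / 2) := by gcongr
    _ ≤ c * u := by nlinarith [le_abs_self (1 - U)]
    _ ≤ c * ‖id u‖ := by gcongr; exact le_abs_self u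

lemma measurableSet_setOf_abs_add_sub_lt {f : ℝ → ℝ} (hf : Measurable f) (v a δ : ℝ) :
    MeasurableSet {t ∈ Icc 0 a | |f (v + t) - f v| < δ} :=
  measurableSet_Icc.inter
    (measurableSet_lt (f := fun t => |f (v + t) - f v|) (by fun_prop) measurable_const)

lemma eventually_ofReal_lt_volume_setOf_abs_add_sub_lt {f : ℝ → ℝ} (hf : Measurable f)
    (hlim : ∀ t, Tendsto (fun u => f (u + t) - f u) atTop (𝓝 0)) {v : ℕ → ℝ}
    (hv : Tendsto v atTop atTop) {c a : ℝ} (hca : c < a) (ha : 0 < a) {δ : ℝ} (hδ : 0 < δ) :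
    ∀ᶠ n in atTop, ENNReal.ofReal c < volume {t ∈ Icc 0 a | |f (v n + t) - f (v n)| < δ} := by
  have hvolume : Tendsto (fun n => volume {t ∈ Icc 0 a | |f (v n + t) - f (v n)| < δ}) atTop
      (𝓝 (volume (Icc 0 a))) := by
    refine tendsto_measure_of_tendsto_indicator atTop
      (fun n => measurableSet_setOf_abs_add_sub_lt hf (v n) a δ) measurableSet_Icc
      measure_Icc_lt_top.ne (Eventually.of_forall fun n t ht => ht.1) fun t => ?_
    have hsmall : ∀ᶠ n in atTop, |f (v n + t) - f (v n)| < δ := by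
      simpa using ((hlim t).comp hv).abs.eventually (eventually_lt_nhds (by simpa using hδ))
    filter_upwards [hsmall] with n hn
    exact and_iff_left hn
  refine hvolume.eventually (eventually_gt_nhds ?_)
  rwa [Real.volume_Icc, sub_zero, ENNReal.ofReal_lt_ofReal_iff ha]

theorem tendstoUniformlyOn_add_sub_of_measurable {f : ℝ → ℝ} (hf : Measurable f)
    (hlim : ∀ t, Tendsto (fun u => f (u + t) - f u) atTop (𝓝 0)) :
    TendstoUniformlyOn (fun u s => f (u + s) - f u) 0 atTop (Icc 0 1) := by
  rw [Metric.tendstoUniformlyOn_iff]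
  by_contra! hbad
  obtain ⟨ε, hε, hfreq⟩ := hbad
  obtain ⟨u, hu, hbig⟩ := exists_seq_forall_of_frequently hfreq
  choose s hs hεs using hbig
  have hus : Tendsto (fun n => u n + s n) atTop atTop :=
    tendsto_atTop_mono (fun n => le_add_of_nonneg_right (hs n).1) hu
  set A := fun n => {t ∈ Icc 0 3 | |f (u n + t) - f (u n)| < ε / 2}
  set B := fun n => {t ∈ Icc 0 2 | |f (u n + s n + t) - f (u n + s n)| < ε / 2}
  have hA : ∀ᶠ n in atTop, ENNReal.ofReal (5 / 2) < volume (A n) :=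
    eventually_ofReal_lt_volume_setOf_abs_add_sub_lt hf hlim hu (by norm_num) (by norm_num)
      (half_pos hε)
  have hB : ∀ᶠ n in atTop, ENNReal.ofReal (3 / 2) < volume (B n) :=
    eventually_ofReal_lt_volume_setOf_abs_add_sub_lt hf hlim hus (by norm_num) (by norm_num)
      (half_pos hε)
  obtain ⟨n, hAn, hBn⟩ := (hA.and hB).exists
  -- `A n` and the translate `s n + B n` are too large to be disjoint subsets of `[0, 3]`.
  obtain ⟨t, htA, htB⟩ : (A n ∩ (fun t => -s n + t) ⁻¹' B n).Nonempty := by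
    refine nonempty_inter_of_measure_lt_add volume
      ((measurableSet_setOf_abs_add_sub_lt hf _ 2 _).preimage (measurable_const_add _))
      (u := Icc 0 3) (fun t ht => ht.1) (fun t ht => ?_) ?_
    · obtain ⟨⟨hr0, hr2⟩, -⟩ := ht
      exact ⟨by linarith [(hs n).1], by linarith [(hs n).2]⟩
    · rw [measure_preimage_add, Real.volume_Icc]
      calc ENNReal.ofReal (3 - 0) < ENNReal.ofReal (5 / 2) + ENNReal.ofReal (3 / 2) := by
            rw [← ENNReal.ofReal_add (by norm_num) (by norm_num), ENNReal.ofReal_lt_ofReal_iff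
              (by norm_num)]
            norm_num
        _ ≤ volume (A n) + volume (B n) := add_le_add hAn.le hBn.le
  have hfar := hεs n
  have hnear : |f (u n + s n + (-s n + t)) - f (u n + s n)| < ε / 2 := htB.2
  rw [add_assoc, add_neg_cancel_left] at hnear
  rw [Pi.zero_apply, Real.dist_eq, zero_sub, abs_neg] at hfar
  linarith [htA.2, abs_sub_le (f (u n + s n)) (f (u n + t)) (f (u n)),
    abs_sub_comm (f (u n + s n)) (f (u n + t))]

def IsRegularlyVarying (m : ℝ → ℝ) (ρ : ℝ) : Prop :=
  ∀ l > 0, Tendsto (fun x => m (l * x) / m x) atTop (𝓝 (l ^ ρ))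

namespace IsRegularlyVarying

variable {m : ℝ → ℝ} {ρ : ℝ}

open Real

lemma tendsto_log_comp_exp_add_sub (hpos : ∀ x, 0 < m x) (hm : IsRegularlyVarying m ρ)
    (t : ℝ) :
    Tendsto (fun u => (log (m (exp (u + t))) - ρ * (u + t)) - (log (m (exp u)) - ρ * u))
      atTop (𝓝 0) := by
  have hlog : Tendsto (fun u => log (m (exp t * exp u) / m (exp u))) atTop
      (𝓝 (log (exp t ^ ρ))) :=
    ((continuousAt_log (rpow_pos_of_pos (exp_pos t) ρ).ne').tendsto.comp
      ((hm (exp t) (exp_pos t)).comp tendsto_exp_atTop))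
  rw [log_rpow (exp_pos t), log_exp] at hlog
  refine (hlog.sub_const (ρ * t)).congr' (Eventually.of_forall fun u => ?_) |>.trans_eq ?_
  · rw [log_div (hpos _).ne' (hpos _).ne', ← exp_add, add_comm t u]
    ring
  · simp

theorem tendsto_div_rpow_atTop (hmeas : Measurable m) (hpos : ∀ x, 0 < m x)
    (hm : IsRegularlyVarying m ρ) {σ : ℝ} (hσ : σ < ρ) :
    Tendsto (fun x => m x / x ^ σ) atTop atTop := by
  set f : ℝ → ℝ := fun u => log (m (exp u)) - ρ * u
  have hf : f =o[atTop] id :=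
    isLittleO_id_of_tendstoUniformlyOn_add_sub (tendstoUniformlyOn_add_sub_of_measurable
      (by fun_prop) (tendsto_log_comp_exp_add_sub hpos hm))
  have hexponent : Tendsto (fun u => u * ((ρ - σ) + f u / u)) atTop atTop :=
    tendsto_id.atTop_mul_pos (sub_pos.2 hσ)
      (by simpa using hf.tendsto_div_nhds_zero.const_add (ρ - σ))
  refine (tendsto_exp_atTop.comp (hexponent.comp tendsto_log_atTop)).congr' ?_
  filter_upwards [eventually_gt_atTop 1] with x hx
  have hlogx : log x ≠ 0 := (log_pos hx).ne'
  simp only [Function.comp, f, exp_log (zero_lt_one.trans hx)]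
  rw [mul_add, mul_div_cancel₀ _ hlogx, rpow_def_of_pos (zero_lt_one.trans hx),
    eq_div_iff (exp_pos _).ne', ← exp_add]
  convert exp_log (hpos x) using 2
  ring

end IsRegularlyVarying

theorem stmt_14_general (β α : ℝ) (hβ : 1 < β)
    (hcond : 2 * α + β < 2) :
    ∃ z : ℝ → ℝ, (∀ x, 0 ≤ z x) ∧ DRIntegrable z ∧
      (∀ n : ℕ, 1 ≤ n → z ((n : ℝ) ^ 2) = (n : ℝ) ^ (-β)) ∧
      ∀ m : ℝ → ℝ, Measurable m → (∀ x, 0 < m x) →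
        (∀ l > 0, Tendsto (fun x => m (l * x) / m x) atTop (nhds (l ^ (1 - α)))) →
        Tendsto (fun n : ℕ => m ((n : ℝ) ^ 2) * z ((n : ℝ) ^ 2)) atTop atTop := by
  refine ⟨spike β, spike_nonneg β, drIntegrable_of_summable (spike_nonneg β) (summable_spike hβ),
    fun n _ => spike_sq β n, fun m hmeas hpos hm => ?_⟩
  have hsq : Tendsto (fun n : ℕ => (n : ℝ) ^ 2) atTop atTop :=
    (tendsto_pow_atTop two_ne_zero).comp tendsto_natCast_atTop_atTop
  have hgrowth := IsRegularlyVarying.tendsto_div_rpow_atTop hmeas hpos hm (σ := β / 2)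
    (by linarith)
  refine (hgrowth.comp hsq).congr fun n => ?_
  have hpow : ((n : ℝ) ^ 2) ^ (β / 2) = (n : ℝ) ^ β := by
    rw [← Real.rpow_natCast, ← Real.rpow_mul n.cast_nonneg]
    ring_nf
  rw [Function.comp_apply, spike_sq, hpow, Real.rpow_neg n.cast_nonneg, div_eq_mul_inv]

/-- counterexample: there is a directly Riemann integrable
`z ≥ 0` (the tent function with peaks `z(n²) = n^{−β}`) such that, for any
positive `m` which is regularly varying of index `1−α` with `2α + β < 2`, one
has `m(n²) z(n²) → ∞`; so dRi alone does not suffice for the key renewal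
theorem. -/
theorem stmt_14 (β α : ℝ) (hβ : 1 < β) (hα0 : 0 < α) (hα1 : α < 1)
    (hcond : 2 * α + β < 2) :
    ∃ z : ℝ → ℝ, (∀ x, 0 ≤ z x) ∧ DRIntegrable z ∧
      (∀ n : ℕ, 1 ≤ n → z ((n : ℝ) ^ 2) = (n : ℝ) ^ (-β)) ∧
      ∀ m : ℝ → ℝ, Measurable m → (∀ x, 0 < m x) →
        (∀ l > 0, Tendsto (fun x => m (l * x) / m x) atTop (nhds (l ^ (1 - α)))) →
        Tendsto (fun n : ℕ => m ((n : ℝ) ^ 2) * z ((n : ℝ) ^ 2)) atTop atTop :=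
  stmt_14_general β α hβ hcond
end
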